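/- arXiv:2001.00257 — 3 statements merged into one kernel-verified Lean document; each statement's English description precedes it below -/
import Mathlib

section
/- Let G be a finite simple graph. If there exists a 2-multi-transversal w₂ of G with Σ_{e ∈ E(G)} w₂(e) ≤ 4·ν(G) and a 3-multi-transversal w₃ of G with Σ_{e ∈ E(G)} w₃(e) ≤ 6·ν(G), then for every integer k ≥ 2 there exists a k-multi-transversal w of G with Σ_{e ∈ E(G)} w(e) ≤ 2·k·ν(G). (Equivalently, if τ*_2(G) ≤ 2 ν(G) and τ*_3(G) ≤ 2 ν(G), then τ*_k(G) ≤ 2 ν(G) for all k ≥ 2.) -/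
open Finset

/-- The edge set of a triangle `t` (a set of vertices): all unordered pairs of
distinct vertices of `t`. -/
def triEdges {V : Type*} [DecidableEq V] (t : Finset V) : Finset (Sym2 V) :=
  t.sym2.filter (fun e => ¬ e.IsDiag)

/-- `P` is a collection of pairwise edge-disjoint triangles of `G`. -/
def IsTrianglePacking {V : Type*} [DecidableEq V] (G : SimpleGraph V)
    (P : Finset (Finset V)) : Prop :=
  (∀ t ∈ P, G.IsNClique 3 t) ∧
    ∀ t₁ ∈ P, ∀ t₂ ∈ P, t₁ ≠ t₂ → Disjoint (triEdges t₁) (triEdges t₂)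

/-- The triangle packing number `ν(G)`: the maximum number of pairwise
edge-disjoint triangles in `G`. -/
noncomputable def packingNumber {V : Type*} [DecidableEq V] (G : SimpleGraph V) : ℕ :=
  sSup {n | ∃ P : Finset (Finset V), IsTrianglePacking G P ∧ P.card = n}

/-- If `τ*₂(G) ≤ 2 ν(G)` and `τ*₃(G) ≤ 2 ν(G)` (witnessed by multi-transversals
of the corresponding total weights), then `τ*ₖ(G) ≤ 2 ν(G)` for every `k ≥ 2`. -/
theorem multitransversal_reduction {V : Type*} [Fintype V] [DecidableEq V]
    (G : SimpleGraph V) [DecidableRel G.Adj]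
    (h2 : ∃ w₂ : Sym2 V → ℕ,
      (∀ t : Finset V, G.IsNClique 3 t → 2 ≤ ∑ e ∈ triEdges t, w₂ e) ∧
      ∑ e ∈ G.edgeFinset, w₂ e ≤ 4 * packingNumber G)
    (h3 : ∃ w₃ : Sym2 V → ℕ,
      (∀ t : Finset V, G.IsNClique 3 t → 3 ≤ ∑ e ∈ triEdges t, w₃ e) ∧
      ∑ e ∈ G.edgeFinset, w₃ e ≤ 6 * packingNumber G) :
    ∀ k : ℕ, 2 ≤ k →
      ∃ w : Sym2 V → ℕ,
        (∀ t : Finset V, G.IsNClique 3 t → k ≤ ∑ e ∈ triEdges t, w e) ∧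
        ∑ e ∈ G.edgeFinset, w e ≤ 2 * k * packingNumber G := by
  obtain ⟨w₂, hw₂t, hw₂s⟩ := h2
  obtain ⟨w₃, hw₃t, hw₃s⟩ := h3
  intro k hk
  set b := k % 2 with hb
  set a := (k - 3 * b) / 2 with ha
  have hab : 2 * a + 3 * b = k := by omega
  refine ⟨fun e => a * w₂ e + b * w₃ e, ?_, ?_⟩
  · intro t ht
    have h2t := hw₂t t ht
    have h3t := hw₃t t ht
    rw [Finset.sum_add_distrib, ← Finset.mul_sum, ← Finset.mul_sum]
    calc k = 2 * a + 3 * b := hab.symm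
    _ = a * 2 + b * 3 := by ring
    _ ≤ a * ∑ e ∈ triEdges t, w₂ e + b * ∑ e ∈ triEdges t, w₃ e := by
        gcongr
  · rw [Finset.sum_add_distrib, ← Finset.mul_sum, ← Finset.mul_sum]
    calc a * ∑ e ∈ G.edgeFinset, w₂ e + b * ∑ e ∈ G.edgeFinset, w₃ e
        ≤ a * (4 * packingNumber G) + b * (6 * packingNumber G) := by gcongr
    _ = 2 * (2 * a + 3 * b) * packingNumber G := by ring
    _ = 2 * k * packingNumber G := by rw [hab]
end

section
/- Let G be a finite simple graph and let w : E(G) → ℕ be a weight function such that every triangle t of G satisfies Σ_{e ∈ E(t)} w(e) ≥ 3. Then there exists a set F of edges of G meeting every triangle of G with 2·|F| ≤ Σ_{e ∈ E(G)} w(e). (Equivalently, τ(G) ≤ (3/2)·τ*_3(G) for every graph G.) -/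
/-!
Edges of weight at least `2` pay for themselves twice over, so they all go into the
transversal. The edges of weight exactly `1` are cut by a two-colouring of the vertices that
leaves at most half of them monochromatic (a uniformly random colouring does so on average);
the monochromatic ones go into the transversal too. A triangle containing no edge of weight
`≥ 2` has three edges of weight `1`, and one of them is monochromatic by pigeonhole.
-/

open Finset

namespace Sym2

variable {V : Type*} [Fintype V] [DecidableEq V]

theorem two_mul_card_map_isDiag {e : Sym2 V} (he : ¬e.IsDiag) :
    2 * #{f : V → Bool | (e.map f).IsDiag} = Fintype.card (V → Bool) := by
  induction e using Sym2.ind with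
  | _ x y =>
  have hxy : x ≠ y := by simpa using he
  -- Recolouring `x` swaps the colourings making `s(x, y)` monochromatic with the others.
  let flip (f : V → Bool) : V → Bool := Function.update f x (!f x)
  have flip_flip (f : V → Bool) : flip (flip f) = f := by simp [flip]
  have flip_apply_eq (f : V → Bool) : flip f x = flip f y ↔ f x ≠ f y := by
    simp only [flip, Function.update_self, Function.update_of_ne hxy.symm]
    cases f x <;> cases f y <;> decide
  have : #{f : V → Bool | f x = f y} = #{f : V → Bool | f x ≠ f y} :=
    card_nbij' flip flip (fun f hf ↦ by simp_all) (fun f hf ↦ by simp_all)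
      (fun f _ ↦ flip_flip f) (fun f _ ↦ flip_flip f)
  simp only [map_mk, mk_isDiag_iff]
  rw [two_mul]
  nth_rw 2 [this]
  rw [card_filter_add_card_filter_not, card_univ]

theorem exists_two_mul_card_filter_map_isDiag_le (B : Finset (Sym2 V))
    (hB : ∀ e ∈ B, ¬e.IsDiag) :
    ∃ f : V → Bool, 2 * #{e ∈ B | (e.map f).IsDiag} ≤ #B := by
  obtain ⟨f, -, hf⟩ := exists_le_of_sum_le (univ_nonempty (α := V → Bool))
    (f := fun f ↦ 2 * #{e ∈ B | (e.map f).IsDiag}) (g := fun _ ↦ #B) <| le_of_eq <| by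
    calc ∑ f : V → Bool, 2 * #{e ∈ B | (e.map f).IsDiag}
        = ∑ e ∈ B, 2 * #{f : V → Bool | (e.map f).IsDiag} := by
          simp only [card_filter, mul_sum]
          exact sum_comm
      _ = ∑ _f : V → Bool, #B := by
          rw [sum_congr rfl fun e he ↦ two_mul_card_map_isDiag (hB e he)]
          simp [mul_comm]
  exact ⟨f, hf⟩

end Sym2

theorem two_mul_card_filter_le_sum {α : Type*} [DecidableEq α] (E : Finset α) (w : α → ℕ)
    (p : α → Prop) [DecidablePred p] (hp : 2 * #{e ∈ E | w e = 1 ∧ p e} ≤ #{e ∈ E | w e = 1}) :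
    2 * #{e ∈ E | 2 ≤ w e ∨ w e = 1 ∧ p e} ≤ ∑ e ∈ E, w e := by
  have heavy : 2 * #{e ∈ E | 2 ≤ w e} ≤ ∑ e ∈ E with 2 ≤ w e, w e := by
    rw [mul_comm, ← smul_eq_mul]
    exact card_nsmul_le_sum _ _ _ fun e he ↦ (mem_filter.1 he).2
  have light : #{e ∈ E | w e = 1} ≤ ∑ e ∈ E with ¬2 ≤ w e, w e := by
    rw [card_eq_sum_ones, ← sum_congr rfl fun e he ↦ (mem_filter.1 he).2]
    exact sum_le_sum_of_subset (monotone_filter_right _ fun e h ↦ by omega)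
  calc 2 * #{e ∈ E | 2 ≤ w e ∨ w e = 1 ∧ p e}
      ≤ 2 * (#{e ∈ E | 2 ≤ w e} + #{e ∈ E | w e = 1 ∧ p e}) := by
        rw [filter_or]; gcongr; exact card_union_le _ _
    _ ≤ ∑ e ∈ E with 2 ≤ w e, w e + ∑ e ∈ E with ¬2 ≤ w e, w e := by omega
    _ = ∑ e ∈ E, w e := sum_filter_add_sum_filter_not _ _ _

section Triangle

variable {V : Type*} [DecidableEq V]

theorem card_triEdges (t : Finset V) : #(triEdges t) = (#t).choose 2 := by
  have : triEdges t = t.offDiag.image Sym2.mk.uncurry := by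
    rw [triEdges, ← image_diag_union_image_offDiag, filter_union, filter_image, filter_image,
      filter_false_of_mem, filter_true_of_mem, image_empty, empty_union]
    · exact fun _ h ↦ not_isDiag_mk_of_mem_offDiag h
    · exact fun _ h ↦ not_not.2 (isDiag_mk_of_mem_diag h)
  rw [this, Sym2.card_image_offDiag]

theorem SimpleGraph.IsClique.triEdges_subset_edgeFinset {G : SimpleGraph V} [Fintype G.edgeSet]
    {t : Finset V} (ht : G.IsClique (t : Set V)) : triEdges t ⊆ G.edgeFinset := by
  intro e he
  induction e using Sym2.ind with
  | _ x y =>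
    simp only [triEdges, mem_filter, mk_mem_sym2_iff, Sym2.mk_isDiag_iff] at he
    exact G.mem_edgeFinset.2 (ht he.1.1 he.1.2 he.2)

theorem exists_mem_triEdges_map_isDiag {t : Finset V} (ht : #t = 3) (f : V → Bool) :
    ∃ e ∈ triEdges t, (e.map f).IsDiag := by
  obtain ⟨x, hx, y, hy, hxy, hf⟩ := exists_ne_map_eq_of_card_lt_of_maps_to
    (s := t) (t := (univ : Finset Bool)) (by simp [ht]) (fun a _ ↦ mem_coe.2 (mem_univ (f a)))
  exact ⟨s(x, y), by simp [triEdges, hx, hy, hxy], by simpa using hf⟩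

theorem exists_mem_triEdges_two_le_or_eq_one_and_map_isDiag {t : Finset V} (ht : #t = 3)
    {w : Sym2 V → ℕ} (hw : 3 ≤ ∑ e ∈ triEdges t, w e) (f : V → Bool) :
    ∃ e ∈ triEdges t, 2 ≤ w e ∨ w e = 1 ∧ (e.map f).IsDiag := by
  obtain ⟨e₀, he₀, hmono⟩ := exists_mem_triEdges_map_isDiag ht f
  by_contra! h
  have hlight : ∀ e ∈ triEdges t, w e ≤ 1 := fun e he ↦ by have := (h e he).1; omega
  have hzero : w e₀ = 0 := by
    have := h e₀ he₀
    by_contra h'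
    exact this.2 (by omega) hmono
  have hrest : ∑ e ∈ (triEdges t).erase e₀, w e ≤ 2 := by
    calc ∑ e ∈ (triEdges t).erase e₀, w e
        ≤ #((triEdges t).erase e₀) • 1 :=
          sum_le_card_nsmul _ _ _ fun e he ↦ hlight e (mem_of_mem_erase he)
      _ = 2 := by simp [card_erase_of_mem he₀, card_triEdges, ht]
  rw [← add_sum_erase _ _ he₀, hzero] at hw
  omega

end Triangle

/-- `τ(G) ≤ (3/2)·τ*₃(G)`: from any 3-multi-transversal `w` one can extract an
integral triangle transversal `F` with `2·|F| ≤ Σ w`. -/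
theorem transversal_from_order_three {V : Type*} [Fintype V] [DecidableEq V]
    (G : SimpleGraph V) [DecidableRel G.Adj] (w : Sym2 V → ℕ)
    (hw : ∀ t : Finset V, G.IsNClique 3 t → 3 ≤ ∑ e ∈ triEdges t, w e) :
    ∃ F : Finset (Sym2 V),
      F ⊆ G.edgeFinset ∧
      (∀ t : Finset V, G.IsNClique 3 t → (triEdges t ∩ F).Nonempty) ∧
      2 * F.card ≤ ∑ e ∈ G.edgeFinset, w e := by
  obtain ⟨f, hf⟩ := Sym2.exists_two_mul_card_filter_map_isDiag_le {e ∈ G.edgeFinset | w e = 1}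
    fun e he ↦ G.not_isDiag_of_mem_edgeSet (G.mem_edgeFinset.1 (mem_filter.1 he).1)
  rw [filter_filter] at hf
  refine ⟨{e ∈ G.edgeFinset | 2 ≤ w e ∨ w e = 1 ∧ (e.map f).IsDiag}, filter_subset _ _,
    fun t ht ↦ ?_, two_mul_card_filter_le_sum _ w _ hf⟩
  obtain ⟨e, he, hwe⟩ :=
    exists_mem_triEdges_two_le_or_eq_one_and_map_isDiag ht.card_eq (hw t ht) f
  exact ⟨e, mem_inter.2 ⟨he, mem_filter.2 ⟨ht.isClique.triEdges_subset_edgeFinset he, hwe⟩⟩⟩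
end

section
/- Let V be a maximum edge-disjoint triangle packing of a finite simple graph G and let ψ ∈ V. If t₁ and t₂ are two distinct triangles of G, each singly-attached to ψ, then either t₁ and t₂ have the same base edge (that is, E(t₁) ∩ E(ψ) = E(t₂) ∩ E(ψ)), or t₁ and t₂ have the same anchoring vertex. -/
open Finset

/-- `P` is a maximum edge-disjoint triangle packing of `G`. -/
def IsMaxTrianglePacking {V : Type*} [DecidableEq V] (G : SimpleGraph V)
    (P : Finset (Finset V)) : Prop :=
  IsTrianglePacking G P ∧
    ∀ Q : Finset (Finset V), IsTrianglePacking G Q → Q.card ≤ P.card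

/-- `t` is a triangle of `G`, not in the packing `P`, and `ψ` is the unique
member of `P` sharing an edge with `t`. -/
def SinglyAttached {V : Type*} [DecidableEq V] (G : SimpleGraph V)
    (P : Finset (Finset V)) (t ψ : Finset V) : Prop :=
  G.IsNClique 3 t ∧ t ∉ P ∧ ψ ∈ P ∧ (triEdges t ∩ triEdges ψ).Nonempty ∧
    ∀ ψ' ∈ P, (triEdges t ∩ triEdges ψ').Nonempty → ψ' = ψ

/-- The base edges of a solution triangle `ψ ∈ P`: the edges of `ψ` that are
shared with some triangle singly-attached to `ψ`. -/
def baseEdges {V : Type*} [DecidableEq V] (G : SimpleGraph V)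
    (P : Finset (Finset V)) (ψ : Finset V) : Set (Sym2 V) :=
  {e | e ∈ triEdges ψ ∧ ∃ t, SinglyAttached G P t ψ ∧ e ∈ triEdges t}

lemma mem_triEdges {V : Type*} [DecidableEq V] {t : Finset V} {x y : V} :
    s(x, y) ∈ triEdges t ↔ x ∈ t ∧ y ∈ t ∧ x ≠ y := by
  simp [triEdges, Finset.mk_mem_sym2_iff, and_assoc]

lemma triEdges_inter {V : Type*} [DecidableEq V] (t s : Finset V) :
    triEdges (t ∩ s) = triEdges t ∩ triEdges s := by
  ext e
  induction e using Sym2.ind with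
  | _ x y => simp [mem_triEdges]; tauto

lemma attach_inter_card {V : Type*} [DecidableEq V] {G : SimpleGraph V}
    {P : Finset (Finset V)} {t ψ : Finset V}
    (h : SinglyAttached G P t ψ) (htc : t.card = 3) (hψc : ψ.card = 3) :
    (t ∩ ψ).card = 2 := by
  obtain ⟨ht, htP, hψP, ⟨e, he⟩, _⟩ := h
  rw [mem_inter, ← mem_inter, ← triEdges_inter] at he
  have h2 : 1 < (t ∩ ψ).card := by
    induction e using Sym2.ind with
    | _ x y =>
      rw [mem_triEdges] at he
      exact Finset.one_lt_card.mpr ⟨x, he.1, y, he.2.1, he.2.2⟩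
  have h3 : (t ∩ ψ).card ≤ 3 := htc ▸ Finset.card_le_card (inter_subset_left)
  rcases Nat.lt_or_ge (t ∩ ψ).card 3 with hlt | hge
  · omega
  · exfalso
    have h4 : t ∩ ψ = t := Finset.eq_of_subset_of_card_le inter_subset_left (by omega)
    have h5 : t ⊆ ψ := h4 ▸ inter_subset_right
    have : t = ψ := Finset.eq_of_subset_of_card_le h5 (by omega)
    exact htP (this ▸ hψP)

lemma attach_sdiff_card {V : Type*} [DecidableEq V] {G : SimpleGraph V}
    {P : Finset (Finset V)} {t ψ : Finset V}
    (h : SinglyAttached G P t ψ) (htc : t.card = 3) (hψc : ψ.card = 3) :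
    (t \ ψ).card = 1 := by
  have := Finset.card_sdiff_add_card_inter t ψ
  have := attach_inter_card h htc hψc
  omega

/-- Two distinct triangles singly-attached to the same solution triangle `ψ`
either have the same base edge or the same anchoring vertex. -/
theorem common_anchoring {V : Type*} [Fintype V] [DecidableEq V]
    (G : SimpleGraph V) (P : Finset (Finset V))
    (hP : IsMaxTrianglePacking G P) (ψ t₁ t₂ : Finset V) (hψ : ψ ∈ P)
    (h₁ : SinglyAttached G P t₁ ψ) (h₂ : SinglyAttached G P t₂ ψ)
    (hne : t₁ ≠ t₂) :
    triEdges t₁ ∩ triEdges ψ = triEdges t₂ ∩ triEdges ψ ∨ t₁ \ ψ = t₂ \ ψ := by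
  by_contra hcon
  push_neg at hcon
  obtain ⟨hbase, hanch⟩ := hcon
  have hψc : ψ.card = 3 := (hP.1.1 ψ hψ).card_eq
  have ht₁c : t₁.card = 3 := h₁.1.card_eq
  have ht₂c : t₂.card = 3 := h₂.1.card_eq
  have hi₁ : (t₁ ∩ ψ).card = 2 := attach_inter_card h₁ ht₁c hψc
  have hi₂ : (t₂ ∩ ψ).card = 2 := attach_inter_card h₂ ht₂c hψc
  have hs₁ : (t₁ \ ψ).card = 1 := attach_sdiff_card h₁ ht₁c hψc
  have hs₂ : (t₂ \ ψ).card = 1 := attach_sdiff_card h₂ ht₂c hψc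
  -- key: if z is in both t₁ and t₂ but not in ψ, it's the common anchor
  have hanchor : ∀ z : V, z ∈ t₁ → z ∈ t₂ → z ∉ ψ → False := by
    intro z hz1 hz2 hzψ
    have e1 : ({z} : Finset V) = t₁ \ ψ :=
      Finset.eq_of_subset_of_card_le
        (singleton_subset_iff.mpr (mem_sdiff.mpr ⟨hz1, hzψ⟩)) (by simp only [card_singleton]; omega)
    have e2 : ({z} : Finset V) = t₂ \ ψ :=
      Finset.eq_of_subset_of_card_le
        (singleton_subset_iff.mpr (mem_sdiff.mpr ⟨hz2, hzψ⟩)) (by simp only [card_singleton]; omega)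
    exact hanch (e1 ▸ e2)
  -- t₁ and t₂ are edge-disjoint
  have hdisj : Disjoint (triEdges t₁) (triEdges t₂) := by
    rw [Finset.disjoint_left]
    intro e he1 he2
    have he : e ∈ triEdges (t₁ ∩ t₂) := by
      rw [triEdges_inter]; exact mem_inter.mpr ⟨he1, he2⟩
    clear he1 he2
    induction e using Sym2.ind with
    | _ x y =>
      rw [mem_triEdges] at he
      obtain ⟨hx, hy, hxy⟩ := he
      rw [mem_inter] at hx hy
      by_cases hxψ : x ∈ ψ
      · by_cases hyψ : y ∈ ψ
        · have hsub1 : ({x, y} : Finset V) ⊆ t₁ ∩ ψ := by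
            intro z hz
            simp only [mem_insert, mem_singleton] at hz
            rcases hz with rfl | rfl
            · exact mem_inter.mpr ⟨hx.1, hxψ⟩
            · exact mem_inter.mpr ⟨hy.1, hyψ⟩
          have hsub2 : ({x, y} : Finset V) ⊆ t₂ ∩ ψ := by
            intro z hz
            simp only [mem_insert, mem_singleton] at hz
            rcases hz with rfl | rfl
            · exact mem_inter.mpr ⟨hx.2, hxψ⟩
            · exact mem_inter.mpr ⟨hy.2, hyψ⟩
          have hc : ({x, y} : Finset V).card = 2 := Finset.card_pair hxy
          have e1 : ({x, y} : Finset V) = t₁ ∩ ψ :=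
            Finset.eq_of_subset_of_card_le hsub1 (by omega)
          have e2 : ({x, y} : Finset V) = t₂ ∩ ψ :=
            Finset.eq_of_subset_of_card_le hsub2 (by omega)
          exact hbase (by rw [← triEdges_inter, ← triEdges_inter, ← e1, ← e2])
        · exact hanchor y hy.1 hy.2 hyψ
      · exact hanchor x hx.1 hx.2 hxψ
  -- the improved packing
  set Q : Finset (Finset V) := insert t₁ (insert t₂ (P.erase ψ)) with hQ
  have hQP : IsTrianglePacking G Q := by
    constructor
    · intro t ht
      simp only [hQ, mem_insert, mem_erase] at ht
      rcases ht with rfl | rfl | ⟨-, htP⟩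
      · exact h₁.1
      · exact h₂.1
      · exact hP.1.1 t htP
    · intro a ha b hb hab
      have key : ∀ c, SinglyAttached G P c ψ → ∀ d ∈ P.erase ψ,
          Disjoint (triEdges c) (triEdges d) := by
        intro c hc d hd
        by_contra hnd
        rw [Finset.not_disjoint_iff_nonempty_inter] at hnd
        exact (Finset.ne_of_mem_erase hd) (hc.2.2.2.2 d (Finset.mem_of_mem_erase hd) hnd)
      simp only [hQ, mem_insert] at ha hb
      rcases ha with rfl | rfl | ha <;> rcases hb with rfl | rfl | hb
      · exact absurd rfl hab
      · exact hdisj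
      · exact key a h₁ b hb
      · exact hdisj.symm
      · exact absurd rfl hab
      · exact key a h₂ b hb
      · exact (key b h₁ a ha).symm
      · exact (key b h₂ a ha).symm
      · exact hP.1.2 a (Finset.mem_of_mem_erase ha) b (Finset.mem_of_mem_erase hb) hab
  have ht₂' : t₂ ∉ P.erase ψ := fun h => h₂.2.1 (Finset.mem_of_mem_erase h)
  have ht₁' : t₁ ∉ insert t₂ (P.erase ψ) := by
    simp only [mem_insert]
    rintro (rfl | h)
    · exact hne rfl
    · exact h₁.2.1 (Finset.mem_of_mem_erase h)
  have hcard : Q.card = P.card + 1 := by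
    have h1 : 1 ≤ P.card := Finset.card_pos.mpr ⟨ψ, hψ⟩
    have he : (P.erase ψ).card = P.card - 1 := Finset.card_erase_of_mem hψ
    rw [hQ, Finset.card_insert_of_notMem ht₁', Finset.card_insert_of_notMem ht₂', he]
    omega
  have := hP.2 Q hQP
  omega
end
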